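/- Let b be a non-extreme point of the closed unit ball of H^∞ with mate a. Then for any sequence (λ_n) ⊂ 𝔻 with |λ_n| → 1, the normalized Cauchy kernels k_{λ_n}/‖k_{λ_n}‖_b converge weakly to 0 in ℋ(b). -/

import Mathlib

open Complex Metric MeasureTheory Filter Set Topology

noncomputable section

/-- `φ` is a bounded analytic function on the open unit disc (i.e. `φ ∈ H^∞`). -/
def Hinf (φ : ℂ → ℂ) : Prop :=
  DifferentiableOn ℂ φ (Metric.ball (0:ℂ) 1) ∧
    ∃ M : ℝ, ∀ z ∈ Metric.ball (0:ℂ) 1, ‖φ z‖ ≤ M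

/-- The closed unit ball of `H^∞`. -/
def unitBallHinf : Set (ℂ → ℂ) :=
  {g | DifferentiableOn ℂ g (Metric.ball (0:ℂ) 1) ∧ ∀ z ∈ Metric.ball (0:ℂ) 1, ‖g z‖ ≤ 1}

/-- `b` is an extreme point of the closed unit ball of `H^∞` (functions being identified
when they agree on the unit disc). -/
def IsExtremePt (b : ℂ → ℂ) : Prop :=
  b ∈ unitBallHinf ∧ ∀ g ∈ unitBallHinf, ∀ h ∈ unitBallHinf,
    (∀ z ∈ Metric.ball (0:ℂ) 1, b z = (g z + h z) / 2) →
    ∀ z ∈ Metric.ball (0:ℂ) 1, g z = h z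

/-- `b` is a non-extreme point of the closed unit ball of `H^∞`. -/
def IsNonExtremePt (b : ℂ → ℂ) : Prop := b ∈ unitBallHinf ∧ ¬ IsExtremePt b

/-- The spectrum `σ(b) = {ζ ∈ clos 𝔻 : liminf_{z→ζ, z∈𝔻} |b z| < 1}`. -/
def specb (b : ℂ → ℂ) : Set ℂ :=
  {ζ | ζ ∈ closure (Metric.ball (0:ℂ) 1) ∧
    Filter.liminf (fun z => ‖b z‖) (nhdsWithin ζ (Metric.ball (0:ℂ) 1)) < 1}

/-- Arc-length (Lebesgue) measure on the unit circle, realized as the pushforward of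
Lebesgue measure on `[0, 2π)` by `θ ↦ exp(iθ)`. -/
def circleMeasure : Measure ℂ :=
  Measure.map (fun θ : ℝ => Complex.exp (θ * Complex.I))
    (volume.restrict (Set.Ico (0:ℝ) (2 * Real.pi)))

/-- `b` is an inner function: `b ∈ H^∞` and the radial limits of `|b|` equal `1`
almost everywhere on the unit circle. -/
def IsInnerFn (b : ℂ → ℂ) : Prop :=
  Hinf b ∧ ∀ᵐ (θ : ℝ) ∂(volume.restrict (Set.Ico (0:ℝ) (2 * Real.pi))),
    Filter.Tendsto (fun r : ℝ => ‖b ((r : ℂ) * Complex.exp (θ * Complex.I))‖)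
      (nhdsWithin 1 (Set.Iio 1)) (nhds 1)

/-- A bounded operator is hypercyclic if some vector has dense orbit. -/
def Hypercyclic {H : Type*} [NormedAddCommGroup H] [NormedSpace ℂ H]
    (T : H →L[ℂ] H) : Prop :=
  ∃ x : H, Dense (Set.range fun n : ℕ => (T ^ n) x)

/-- Lower density of a set of natural numbers. -/
def lowerDensity (A : Set ℕ) : ℝ :=
  Filter.liminf (fun N : ℕ => (Nat.card ↥(A ∩ Set.Iio N) : ℝ) / N) Filter.atTop

/-- A bounded operator is frequently hypercyclic if some vector visits every nonempty
open set along a set of instants of positive lower density. -/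
def FreqHypercyclic {H : Type*} [NormedAddCommGroup H] [NormedSpace ℂ H]
    (T : H →L[ℂ] H) : Prop :=
  ∃ x : H, ∀ U : Set H, IsOpen U → U.Nonempty →
    0 < lowerDensity {n : ℕ | (T ^ n) x ∈ U}

/--
Abstract model of the Hardy-space / de Branges–Rovnyak setting attached to a function
`b` in the closed unit ball of `H^∞`:
* `H2` is the Hardy space `H²`, realized as the reproducing-kernel Hilbert space of
  analytic functions on `𝔻` with Szegő kernel `k_λ(z) = (1 - conj λ z)⁻¹`;
* `Hb` is the de Branges–Rovnyak space `ℋ(b)`, the RKHS with kernel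
  `k_λ^b(z) = (1 - conj (b λ) b z) / (1 - conj λ z)`, contractively contained in `H²`
  via `j`;
* `mul φ` is the multiplication (analytic Toeplitz) operator `M_φ = T_φ` on `H²` for
  `φ ∈ H^∞` (so the co-analytic Toeplitz operator `T_{φ̄}` is its adjoint), and
  `toepb φ` is the restriction of `T_{φ̄}` to `ℋ(b)`;
* `L2` is `L²(𝕋) ⊇ H²` with isometric embedding `emb`, Riesz projection
  `P₊ = Pplus` (the adjoint of `emb`), and multiplication operators `mulL2 u` by
  boundary functions `u`, pinned down on continuous symbols by norm bounds,
  additivity, multiplicativity, the adjoint rule and compatibility with `mul` on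
  the disc algebra;
* `shiftb` is the restricted backward shift `X_b = S*|ℋ(b)`.
-/
structure DBR (b : ℂ → ℂ) (H2 Hb L2 : Type*)
    [NormedAddCommGroup H2] [InnerProductSpace ℂ H2] [CompleteSpace H2]
    [NormedAddCommGroup Hb] [InnerProductSpace ℂ Hb] [CompleteSpace Hb]
    [NormedAddCommGroup L2] [InnerProductSpace ℂ L2] [CompleteSpace L2] where
  h2Fun : H2 →ₗ[ℂ] (ℂ → ℂ)
  h2Fun_inj : ∀ f : H2, (∀ z ∈ Metric.ball (0:ℂ) 1, h2Fun f z = 0) → f = 0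
  szego : ℂ → H2
  h2_repro : ∀ f : H2, ∀ l ∈ Metric.ball (0:ℂ) 1, h2Fun f l = inner ℂ (szego l) f
  szego_eq : ∀ l ∈ Metric.ball (0:ℂ) 1, ∀ z ∈ Metric.ball (0:ℂ) 1,
      h2Fun (szego l) z = (1 - (starRingEnd ℂ) l * z)⁻¹
  hbFun : Hb →ₗ[ℂ] (ℂ → ℂ)
  hbFun_inj : ∀ f : Hb, (∀ z ∈ Metric.ball (0:ℂ) 1, hbFun f z = 0) → f = 0
  hbker : ℂ → Hb
  hb_repro : ∀ f : Hb, ∀ l ∈ Metric.ball (0:ℂ) 1, hbFun f l = inner ℂ (hbker l) f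
  hbker_eq : ∀ l ∈ Metric.ball (0:ℂ) 1, ∀ z ∈ Metric.ball (0:ℂ) 1,
      hbFun (hbker l) z =
        (1 - (starRingEnd ℂ) (b l) * b z) / (1 - (starRingEnd ℂ) l * z)
  j : Hb →L[ℂ] H2
  j_contractive : ∀ f : Hb, ‖j f‖ ≤ ‖f‖
  j_compat : ∀ f : Hb, ∀ z ∈ Metric.ball (0:ℂ) 1, h2Fun (j f) z = hbFun f z
  mul : (ℂ → ℂ) → (H2 →L[ℂ] H2)
  mul_spec : ∀ φ : ℂ → ℂ, Hinf φ → ∀ f : H2, ∀ z ∈ Metric.ball (0:ℂ) 1,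
      h2Fun (mul φ f) z = φ z * h2Fun f z
  toepb : (ℂ → ℂ) → (Hb →L[ℂ] Hb)
  toepb_spec : ∀ φ : ℂ → ℂ, Hinf φ → ∀ f : Hb,
      j (toepb φ f) = ContinuousLinearMap.adjoint (mul φ) (j f)
  emb : H2 →ₗᵢ[ℂ] L2
  Pplus : L2 →L[ℂ] H2
  Pplus_spec : ∀ (g : L2) (f : H2), (inner ℂ (Pplus g) f : ℂ) = inner ℂ g (emb f)
  mulL2 : (ℂ → ℂ) → (L2 →L[ℂ] L2)
  mulL2_bound : ∀ (u : ℂ → ℂ) (M : ℝ), ContinuousOn u (Metric.sphere (0:ℂ) 1) →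
      (∀ ζ ∈ Metric.sphere (0:ℂ) 1, ‖u ζ‖ ≤ M) → ‖mulL2 u‖ ≤ M
  mulL2_add : ∀ u v : ℂ → ℂ, ContinuousOn u (Metric.sphere (0:ℂ) 1) →
      ContinuousOn v (Metric.sphere (0:ℂ) 1) → mulL2 (u + v) = mulL2 u + mulL2 v
  mulL2_comp : ∀ u v : ℂ → ℂ, ContinuousOn u (Metric.sphere (0:ℂ) 1) →
      ContinuousOn v (Metric.sphere (0:ℂ) 1) →
      mulL2 (u * v) = (mulL2 u).comp (mulL2 v)
  mulL2_adj : ∀ u : ℂ → ℂ, ContinuousOn u (Metric.sphere (0:ℂ) 1) →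
      ContinuousLinearMap.adjoint (mulL2 u) = mulL2 (fun z => (starRingEnd ℂ) (u z))
  mulL2_compat : ∀ φ : ℂ → ℂ, Hinf φ → ContinuousOn φ (closure (Metric.ball (0:ℂ) 1)) →
      ∀ f : H2, mulL2 φ (emb f) = emb (mul φ f)
  shiftb : Hb →L[ℂ] Hb
  shiftb_spec : ∀ f : Hb, ∀ z ∈ Metric.ball (0:ℂ) 1, z ≠ 0 →
      hbFun (shiftb f) z = (hbFun f z - hbFun f 0) / z

variable {H2 Hb L2 : Type*}
  [NormedAddCommGroup H2] [InnerProductSpace ℂ H2] [CompleteSpace H2]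
  [NormedAddCommGroup Hb] [InnerProductSpace ℂ Hb] [CompleteSpace Hb]
  [NormedAddCommGroup L2] [InnerProductSpace ℂ L2] [CompleteSpace L2]

/-!
The embedding `ℋ(b) ↪ H²` is contractive, so `‖k_λ‖_b ≥ ‖k_λ‖_{H²} = (1 - |λ|²)^{-1/2} → ∞`,
while `⟪k_λ, k^b_μ⟫ = conj (k_λ μ)` stays bounded by `(1 - |μ|)⁻¹`. Hence the normalized kernels
tend to `0` against every reproducing kernel of `ℋ(b)`; these span a dense subspace, and a
bounded sequence converging weakly on a dense set converges weakly everywhere.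
-/

section WeakConvergence

variable {𝕜 E ι : Type*} [RCLike 𝕜] [NormedAddCommGroup E] [InnerProductSpace 𝕜 E]

/-- The functionals `⟪x i, ·⟫` are equi-Lipschitz, so the vectors along which they tend to `0`
form a closed subspace. -/
theorem tendsto_inner_zero_of_dense_span {l : Filter ι} {x : ι → E} {C : NNReal}
    (hx : ∀ i, ‖x i‖ ≤ C) {s : Set E} (hs : Dense (Submodule.span 𝕜 s : Set E))
    (h : ∀ g ∈ s, Tendsto (fun i => inner 𝕜 (x i) g) l (𝓝 0)) (f : E) :
    Tendsto (fun i => inner 𝕜 (x i) f) l (𝓝 0) := by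
  let S : Submodule 𝕜 E :=
    { carrier := {g | Tendsto (fun i => inner 𝕜 (x i) g) l (𝓝 0)}
      add_mem' := fun hg hh => by
        simpa only [Set.mem_ofPred_eq, inner_add_right, add_zero] using hg.add hh
      zero_mem' := by simp only [Set.mem_ofPred_eq, inner_zero_right, tendsto_const_nhds]
      smul_mem' := fun c g hg => by
        simpa only [Set.mem_ofPred_eq, inner_smul_right, mul_zero] using hg.const_mul c }
  have hlip : ∀ i, LipschitzWith C (fun g => inner 𝕜 (x i) g) := fun i =>
    (innerSL 𝕜 (x i)).lipschitz.weaken <| by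
      rw [← NNReal.coe_le_coe, coe_nnnorm, innerSL_apply_norm]
      exact hx i
  have hclosed : IsClosed (S : Set E) :=
    (LipschitzWith.uniformEquicontinuous _ C hlip).equicontinuous.isClosed_setOfPred_tendsto
      continuous_const
  exact closure_minimal ((Submodule.span_le (p := S)).mpr h) hclosed (hs f)

end WeakConvergence

theorem norm_inv_norm_smul_le_one {E : Type*} [NormedAddCommGroup E] [NormedSpace ℝ E]
    (x : E) : ‖‖x‖⁻¹ • x‖ ≤ 1 := by
  rw [norm_smul, norm_inv, norm_norm, inv_mul_eq_div]
  exact div_self_le_one _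

theorem norm_inv_one_sub_conj_mul_le {a z : ℂ} (ha : ‖a‖ ≤ 1) (hz : ‖z‖ < 1) :
    ‖(1 - (starRingEnd ℂ) a * z)⁻¹‖ ≤ (1 - ‖z‖)⁻¹ := by
  rw [norm_inv]
  refine inv_anti₀ (sub_pos.mpr hz) ?_
  calc 1 - ‖z‖ ≤ ‖(1 : ℂ)‖ - ‖(starRingEnd ℂ) a * z‖ := by
        rw [norm_one, norm_mul, RCLike.norm_conj]
        nlinarith [norm_nonneg z]
    _ ≤ ‖1 - (starRingEnd ℂ) a * z‖ := norm_sub_norm_le _ _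

namespace DBR

variable {b : ℂ → ℂ} (D : DBR b H2 Hb L2)

theorem dense_span_hbker : Dense (Submodule.span ℂ (D.hbker '' ball (0:ℂ) 1) : Set Hb) := by
  rw [Submodule.dense_iff_topologicalClosure_eq_top, Submodule.topologicalClosure_eq_top_iff,
    Submodule.eq_bot_iff]
  refine fun g hg => D.hbFun_inj g fun z hz => ?_
  rw [D.hb_repro g z hz]
  exact hg _ (Submodule.subset_span ⟨z, hz, rfl⟩)

theorem norm_szego {μ : ℂ} (hμ : μ ∈ ball (0:ℂ) 1) :
    ‖D.szego μ‖ = (√(1 - ‖μ‖ ^ 2))⁻¹ := by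
  have hinner : (inner ℂ (D.szego μ) (D.szego μ) : ℂ) = ((1 - ‖μ‖ ^ 2 : ℝ) : ℂ)⁻¹ := by
    rw [← D.h2_repro _ μ hμ, D.szego_eq μ hμ μ hμ, mul_comm, Complex.mul_conj,
      Complex.normSq_eq_norm_sq]
    push_cast
    rfl
  have hsq : ‖D.szego μ‖ ^ 2 = (1 - ‖μ‖ ^ 2)⁻¹ := by
    rw [← inner_self_eq_norm_sq (𝕜 := ℂ), hinner, ← Complex.ofReal_inv, RCLike.re_to_complex,
      Complex.ofReal_re]
  rw [← Real.sqrt_inv, ← hsq, Real.sqrt_sq (norm_nonneg _)]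

theorem j_eq_szego {k : Hb} {μ : ℂ} (hμ : μ ∈ ball (0:ℂ) 1)
    (hk : ∀ z ∈ ball (0:ℂ) 1, D.hbFun k z = (1 - (starRingEnd ℂ) μ * z)⁻¹) :
    D.j k = D.szego μ := by
  refine sub_eq_zero.mp (D.h2Fun_inj _ fun z hz => ?_)
  rw [map_sub, Pi.sub_apply, D.j_compat k z hz, hk z hz, D.szego_eq μ hμ z hz, sub_self]

theorem inv_norm_le_sqrt_of_hbFun_eq {k : Hb} {μ : ℂ} (hμ : μ ∈ ball (0:ℂ) 1)
    (hk : ∀ z ∈ ball (0:ℂ) 1, D.hbFun k z = (1 - (starRingEnd ℂ) μ * z)⁻¹) :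
    ‖k‖⁻¹ ≤ √(1 - ‖μ‖ ^ 2) := by
  have hpos : 0 < 1 - ‖μ‖ ^ 2 := by
    have := mem_ball_zero_iff.mp hμ
    nlinarith [norm_nonneg μ]
  have hle : ‖D.szego μ‖ ≤ ‖k‖ := D.j_eq_szego hμ hk ▸ D.j_contractive k
  rw [D.norm_szego hμ] at hle
  simpa using inv_anti₀ (by positivity) hle

end DBR

theorem statement5_general (b : ℂ → ℂ) (D : DBR b H2 Hb L2)
    (l : ℕ → ℂ) (hl : ∀ n, l n ∈ Metric.ball (0:ℂ) 1)
    (hlim : Filter.Tendsto (fun n => ‖l n‖) Filter.atTop (nhds 1))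
    (k : ℕ → Hb)
    (hk : ∀ n, ∀ w ∈ Metric.ball (0:ℂ) 1,
      D.hbFun (k n) w = (1 - (starRingEnd ℂ) (l n) * w)⁻¹) :
    ∀ f : Hb, Filter.Tendsto (fun n => (inner ℂ (‖k n‖⁻¹ • k n) f : ℂ))
      Filter.atTop (nhds 0) := by
  have hsqrt : Tendsto (fun n => √(1 - ‖l n‖ ^ 2)) atTop (𝓝 0) := by
    simpa using ((tendsto_const_nhds (x := (1 : ℝ))).sub (hlim.pow 2)).sqrt
  have hinv : Tendsto (fun n => ‖k n‖⁻¹) atTop (𝓝 0) :=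
    squeeze_zero (fun n => by positivity)
      (fun n => D.inv_norm_le_sqrt_of_hbFun_eq (hl n) (hk n)) hsqrt
  refine tendsto_inner_zero_of_dense_span (C := 1) (fun n => norm_inv_norm_smul_le_one (k n))
    D.dense_span_hbker ?_
  rintro _ ⟨μ, hμ, rfl⟩
  have hbound : ∀ n, ‖(inner ℂ (k n) (D.hbker μ) : ℂ)‖ ≤ (1 - ‖μ‖)⁻¹ := fun n => by
    rw [← inner_conj_symm, RCLike.norm_conj, ← D.hb_repro _ μ hμ, hk n μ hμ]
    exact norm_inv_one_sub_conj_mul_le (mem_ball_zero_iff.mp (hl n)).le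
      (mem_ball_zero_iff.mp hμ)
  rw [tendsto_zero_iff_norm_tendsto_zero]
  refine squeeze_zero (fun n => norm_nonneg _) (fun n => ?_)
    (by simpa using hinv.mul_const (1 - ‖μ‖)⁻¹)
  rw [inner_smul_left_eq_smul, norm_smul, Real.norm_of_nonneg (by positivity)]
  exact mul_le_mul_of_nonneg_left (hbound n) (by positivity)

/-- For `b` non-extreme and `(λ_n) ⊆ 𝔻` with `|λ_n| → 1`, the normalized
Cauchy kernels `k_{λ_n}/‖k_{λ_n}‖_b` converge weakly to `0` in `ℋ(b)`. -/
theorem statement5 (b : ℂ → ℂ) (D : DBR b H2 Hb L2) (hb : IsNonExtremePt b)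
    (l : ℕ → ℂ) (hl : ∀ n, l n ∈ Metric.ball (0:ℂ) 1)
    (hlim : Filter.Tendsto (fun n => ‖l n‖) Filter.atTop (nhds 1))
    (k : ℕ → Hb)
    (hk : ∀ n, ∀ w ∈ Metric.ball (0:ℂ) 1,
      D.hbFun (k n) w = (1 - (starRingEnd ℂ) (l n) * w)⁻¹) :
    ∀ f : Hb, Filter.Tendsto (fun n => (inner ℂ (‖k n‖⁻¹ • k n) f : ℂ))
      Filter.atTop (nhds 0) :=
  statement5_general b D l hl hlim k hk
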